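/- arXiv:2312.11791 — 6 statements merged into one kernel-verified Lean document; each statement's English description precedes it below -/
import Mathlib

section
/- Let I12, I23, I31 > 1 and let (u,v,w) ∈ ℝ³ with u ≥ 0, v ≥ 0 and w ≤ 0. Then π(u,v,w) > 0 if and only if either (i) u + I31·w ≥ 0 and u + I31·w + v > 0, or (ii) u + I31·w < 0 and u + I23·I31·v + I31·w > 0. (Condition (i) expresses that after type-1 robots eliminate the opponent's surplus of type-3 robots the remaining distribution (u + I31·w, v, 0) is nonnegative and nonzero; condition (ii) expresses that the remaining type-3 surplus is further eliminated by type-2 robots.) -/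
/-- `g1(u,v,w) = u + I23·I31·v + I31·w`. -/
def g1 (I23 I31 u v w : ℝ) : ℝ := u + I23 * I31 * v + I31 * w

/-- `g2(u,v,w) = I12·u + v + I12·I31·w`. -/
def g2 (I12 I31 u v w : ℝ) : ℝ := I12 * u + v + I12 * I31 * w

/-- `g3(u,v,w) = I12·I23·u + I23·v + w`. -/
def g3 (I12 I23 u v w : ℝ) : ℝ := I12 * I23 * u + I23 * v + w

/-- The outcome interface `π = max{min{g1,g2}, min{g1,g3}, min{g2,g3}}`. -/
def pioi (I12 I23 I31 u v w : ℝ) : ℝ :=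
  max (max (min (g1 I23 I31 u v w) (g2 I12 I31 u v w))
           (min (g1 I23 I31 u v w) (g3 I12 I23 u v w)))
      (min (g2 I12 I31 u v w) (g3 I12 I23 u v w))

theorem stmt_0 (I12 I23 I31 u v w : ℝ)
    (hI12 : 1 < I12) (hI23 : 1 < I23) (hI31 : 1 < I31)
    (hu : 0 ≤ u) (hv : 0 ≤ v) (hw : w ≤ 0) :
    0 < pioi I12 I23 I31 u v w ↔
      ((0 ≤ u + I31 * w ∧ 0 < u + I31 * w + v) ∨
       (u + I31 * w < 0 ∧ 0 < u + I23 * I31 * v + I31 * w)) := by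
  have hI1223 : 1 < I12 * I23 := one_lt_mul hI12.le hI23
  have hIall : 1 < I12 * I23 * I31 := one_lt_mul hI1223.le hI31
  simp only [pioi, g1, g2, g3, lt_max_iff, lt_min_iff]
  constructor
  · rintro ((⟨h1, h2⟩ | ⟨h1, h3⟩) | ⟨h2, h3⟩)
    · by_cases ha : 0 ≤ u + I31 * w
      · refine Or.inl ⟨ha, ?_⟩
        by_contra hc
        push_neg at hc
        have hv0 : v = 0 := by linarith
        rw [hv0] at h1
        linarith
      · exact Or.inr ⟨lt_of_not_ge ha, h1⟩
    · by_cases ha : 0 ≤ u + I31 * w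
      · refine Or.inl ⟨ha, ?_⟩
        by_contra hc
        push_neg at hc
        have hv0 : v = 0 := by linarith
        rw [hv0] at h1
        linarith
      · exact Or.inr ⟨lt_of_not_ge ha, h1⟩
    · by_cases ha : 0 ≤ u + I31 * w
      · refine Or.inl ⟨ha, ?_⟩
        by_contra hc
        push_neg at hc
        have hv0 : v = 0 := by linarith
        rw [hv0] at h2
        have h12a : I12 * (u + I31 * w) ≤ 0 :=
          mul_nonpos_of_nonneg_of_nonpos (by linarith) (by linarith)
        nlinarith
      · refine Or.inr ⟨lt_of_not_ge ha, ?_⟩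
        by_contra hg1
        push_neg at hg1
        have ha' : u + I31 * w < 0 := lt_of_not_ge ha
        have hA : 0 < I23 * I31 * (v + I12 * (u + I31 * w)) :=
          mul_pos (by nlinarith) (by nlinarith)
        have hB : 0 ≤ (I12 * I23 * I31 - 1) * (-(u + I31 * w)) :=
          mul_nonneg (by linarith) (by linarith)
        nlinarith
  · rintro (⟨ha, hav⟩ | ⟨ha, hg1⟩)
    · refine Or.inl (Or.inl ⟨?_, ?_⟩)
      · nlinarith [mul_nonneg (by nlinarith : (0:ℝ) ≤ I23 * I31 - 1) hv]
      · nlinarith [mul_nonneg (by linarith : (0:ℝ) ≤ I12 - 1) ha]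
    · refine Or.inl (Or.inr ⟨hg1, ?_⟩)
      have h5 : 0 < I31 * (I12 * I23 * u + I23 * v + w) := by
        nlinarith [mul_nonneg hu (by linarith : (0:ℝ) ≤ I12 * I23 * I31 - 1)]
      by_contra hc
      push_neg at hc
      have : I31 * (I12 * I23 * u + I23 * v + w) ≤ 0 :=
        mul_nonpos_of_nonneg_of_nonpos (by linarith) hc
      linarith
end

section
/- Let I12, I23, I31 > 1 and let (u,v,w) ∈ ℝ³ with u ≥ 0, v ≥ 0 and w ≤ 0. Then the sign of π(u,v,w) coincides with the sign of g1(u,v,w); that is, π(u,v,w) > 0 ⟺ g1(u,v,w) > 0, π(u,v,w) = 0 ⟺ g1(u,v,w) = 0, and π(u,v,w) < 0 ⟺ g1(u,v,w) < 0. -/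
theorem stmt_1 (I12 I23 I31 u v w : ℝ)
    (hI12 : 1 < I12) (hI23 : 1 < I23) (hI31 : 1 < I31)
    (hu : 0 ≤ u) (hv : 0 ≤ v) (hw : w ≤ 0) :
    (0 < pioi I12 I23 I31 u v w ↔ 0 < g1 I23 I31 u v w) ∧
    (pioi I12 I23 I31 u v w = 0 ↔ g1 I23 I31 u v w = 0) ∧
    (pioi I12 I23 I31 u v w < 0 ↔ g1 I23 I31 u v w < 0) := by
  set a := g1 I23 I31 u v w with ha
  set b := g2 I12 I31 u v w with hb
  set c := g3 I12 I23 u v w with hc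
  have h12 : (1:ℝ) < I12 * I23 := by nlinarith
  have hprod : (0:ℝ) ≤ I12 * I23 * I31 - 1 := by nlinarith
  have hba : b ≤ I12 * a := by
    simp only [ha, hb, g1, g2]
    nlinarith [mul_nonneg hv hprod]
  have hac : a ≤ I31 * c := by
    simp only [ha, hc, g1, g3]
    nlinarith [mul_nonneg hu hprod]
  have hpi : pioi I12 I23 I31 u v w = max (max (min a b) (min a c)) (min b c) := rfl
  have hsgn : (0 < pioi I12 I23 I31 u v w ∧ 0 < a) ∨
      (pioi I12 I23 I31 u v w = 0 ∧ a = 0) ∨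
      (pioi I12 I23 I31 u v w < 0 ∧ a < 0) := by
    rcases lt_trichotomy 0 a with h | h | h
    · left
      have hcpos : 0 < c := by nlinarith
      refine ⟨?_, h⟩
      rw [hpi]
      have : 0 < min a c := lt_min h hcpos
      calc (0:ℝ) < min a c := this
        _ ≤ max (min a b) (min a c) := le_max_right _ _
        _ ≤ _ := le_max_left _ _
    · right; left
      have hbnp : b ≤ 0 := by nlinarith
      have hcnn : 0 ≤ c := by nlinarith
      refine ⟨?_, h.symm⟩
      rw [hpi]
      have hminac : min a c = 0 := by rw [← h]; exact min_eq_left hcnn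
      apply le_antisymm
      · apply max_le
        · apply max_le
          · exact le_trans (min_le_right _ _) hbnp
          · rw [hminac]
        · exact le_trans (min_le_left _ _) hbnp
      · calc (0:ℝ) = min a c := hminac.symm
          _ ≤ max (min a b) (min a c) := le_max_right _ _
          _ ≤ _ := le_max_left _ _
    · right; right
      have hbneg : b < 0 := by nlinarith
      refine ⟨?_, h⟩
      rw [hpi]
      apply max_lt
      · apply max_lt
        · exact lt_of_le_of_lt (min_le_left _ _) h
        · exact lt_of_le_of_lt (min_le_left _ _) h
      · exact lt_of_le_of_lt (min_le_left _ _) hbneg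
  rcases hsgn with ⟨h1, h2⟩ | ⟨h1, h2⟩ | ⟨h1, h2⟩ <;>
    refine ⟨⟨fun _ => by linarith, fun _ => by linarith⟩,
      ⟨fun h => by linarith, fun h => by linarith⟩,
      ⟨fun _ => by linarith, fun _ => by linarith⟩⟩
end

section
/- Let U > 0 and let a be a real number with −U ≤ a ≤ U. Then: (existence) there exists z ∈ {0,1} such that s := max{a, 0} satisfies s ≥ 0, s ≤ U·z, s ≥ a, and s ≤ a + U·(1 − z); (uniqueness) for every pair (s, z) with z ∈ {0,1} satisfying s ≥ 0, s ≤ U·z, s ≥ a, s ≤ a + U·(1 − z), one has s = max{a, 0}. -/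
theorem stmt_14 (U a : ℝ) (hU : 0 < U) (ha : -U ≤ a) (ha' : a ≤ U) :
    (∃ z ∈ ({0, 1} : Set ℝ),
      0 ≤ max a 0 ∧ max a 0 ≤ U * z ∧ a ≤ max a 0 ∧ max a 0 ≤ a + U * (1 - z)) ∧
    (∀ s z : ℝ, z ∈ ({0, 1} : Set ℝ) →
      0 ≤ s → s ≤ U * z → a ≤ s → s ≤ a + U * (1 - z) → s = max a 0) := by
  constructor
  · rcases le_or_gt a 0 with h | h
    · exact ⟨0, Or.inl rfl, le_max_right _ _, by simp [max_eq_right h], le_max_left _ _,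
        by simp [max_eq_right h]; nlinarith⟩
    · exact ⟨1, Or.inr rfl, le_max_right _ _, by simp [max_eq_left h.le]; linarith,
        le_max_left _ _, by simp [max_eq_left h.le]⟩
  · rintro s z (rfl | rfl) h0 h1 h2 h3
    · simp at h1 h3
      have : s = 0 := le_antisymm h1 h0
      subst this
      exact (max_eq_right h2).symm
    · simp at h1 h3
      have : s = a := le_antisymm h3 h2
      subst this
      exact (max_eq_left h0).symm
end

section
/- Let U > 0 and let a, b be real numbers with a, b, a − b ∈ [−U, U]. Then: (existence) there exist z1, z2 ∈ {0,1} such that s := max{a, 0} and t := max{a, b, 0} satisfy s ≥ 0, s ≤ U·z1, s ≥ a, s ≤ a + U·(1 − z1), t ≥ b, t ≤ b + U·z2, t ≥ s, and t ≤ s + U·(1 − z2); (uniqueness) for every (s, t, z1, z2) with z1, z2 ∈ {0,1} satisfying all eight inequalities, one has s = max{a, 0} and t = max{a, b, 0}. -/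
theorem stmt_15 (U a b : ℝ) (hU : 0 < U)
    (ha : a ∈ Set.Icc (-U) U) (hb : b ∈ Set.Icc (-U) U)
    (hab : a - b ∈ Set.Icc (-U) U) :
    (∃ z1 ∈ ({0, 1} : Set ℝ), ∃ z2 ∈ ({0, 1} : Set ℝ),
      0 ≤ max a 0 ∧ max a 0 ≤ U * z1 ∧ a ≤ max a 0 ∧ max a 0 ≤ a + U * (1 - z1) ∧
      b ≤ max a (max b 0) ∧ max a (max b 0) ≤ b + U * z2 ∧
      max a 0 ≤ max a (max b 0) ∧ max a (max b 0) ≤ max a 0 + U * (1 - z2)) ∧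
    (∀ s t z1 z2 : ℝ, z1 ∈ ({0, 1} : Set ℝ) → z2 ∈ ({0, 1} : Set ℝ) →
      0 ≤ s → s ≤ U * z1 → a ≤ s → s ≤ a + U * (1 - z1) →
      b ≤ t → t ≤ b + U * z2 → s ≤ t → t ≤ s + U * (1 - z2) →
      s = max a 0 ∧ t = max a (max b 0)) := by
  obtain ⟨ha1, ha2⟩ := ha
  obtain ⟨hb1, hb2⟩ := hb
  obtain ⟨hab1, hab2⟩ := hab
  have key : max a (max b 0) = max (max a 0) b := by
    rw [max_comm b 0, ← max_assoc]
  constructor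
  · rw [key]
    rcases le_or_gt a 0 with h | h
    · rw [max_eq_right h]
      rcases le_or_gt (0:ℝ) b with h2 | h2
      · refine ⟨0, by norm_num, 0, by norm_num, ?_⟩
        rw [max_eq_right h2]
        refine ⟨?_, ?_, ?_, ?_, ?_, ?_, ?_, ?_⟩ <;> nlinarith
      · refine ⟨0, by norm_num, 1, by norm_num, ?_⟩
        rw [max_eq_left h2.le]
        refine ⟨?_, ?_, ?_, ?_, ?_, ?_, ?_, ?_⟩ <;> nlinarith
    · rw [max_eq_left h.le]
      rcases le_or_gt a b with h2 | h2
      · refine ⟨1, by norm_num, 0, by norm_num, ?_⟩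
        rw [max_eq_right h2]
        refine ⟨?_, ?_, ?_, ?_, ?_, ?_, ?_, ?_⟩ <;> nlinarith
      · refine ⟨1, by norm_num, 1, by norm_num, ?_⟩
        rw [max_eq_left h2.le]
        refine ⟨?_, ?_, ?_, ?_, ?_, ?_, ?_, ?_⟩ <;> nlinarith
  · rintro s t z1 z2 (rfl | rfl) (rfl | rfl) h1 h2 h3 h4 h5 h6 h7 h8 <;>
      norm_num at h2 h4 h6 h8 <;> rw [key]
    · have hs : s = 0 := le_antisymm h2 h1
      have hmx : max a 0 = 0 := max_eq_right (by linarith)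
      have ht : t = b := le_antisymm h6 h5
      rw [hmx, hs, ht, max_eq_right (by linarith)]
      exact ⟨rfl, rfl⟩
    · have hs : s = 0 := le_antisymm h2 h1
      have hmx : max a 0 = 0 := max_eq_right (by linarith)
      have ht : t = s := le_antisymm h8 h7
      rw [hmx, hs, ht, max_eq_left (by linarith)]
      exact ⟨rfl, by linarith⟩
    · have hs : s = a := le_antisymm h4 h3
      have hmx : max a 0 = a := max_eq_left (by linarith)
      have ht : t = b := le_antisymm h6 h5
      rw [hmx, ht, max_eq_right (by linarith)]
      exact ⟨hs, rfl⟩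
    · have hs : s = a := le_antisymm h4 h3
      have hmx : max a 0 = a := max_eq_left (by linarith)
      have ht : t = s := le_antisymm h8 h7
      rw [hmx, ht, max_eq_left (by linarith)]
      exact ⟨hs, by linarith⟩
end

section
/- Let n be a finite nonempty index type and let adj : n → n → Prop be a relation such that for every i there exists j with adj i j. Let T̃ be the set of real n×n matrices T such that all entries are nonnegative, every row sums to 1, and T i j = 0 whenever adj i j fails; let T̂ be the subset of T̃ consisting of matrices all of whose entries lie in {0,1}. Then T̃ equals the convex hull (over ℝ) of T̂. -/
/-! Both sets are products over the rows. A row of `T̃` is a point of the face of the standard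
simplex spanned by the basis vectors `e j` with `adj i j`, and a row of `T̂` is one of these
vertices. The face is the convex hull of its vertices, since `x = ∑ j, x j • e j`, and the convex
hull of a product of sets is the product of their convex hulls. -/

open Finset Set

section Semiring

variable (𝕜 : Type*) [Semiring 𝕜] [PartialOrder 𝕜] {ι m : Type*} [Fintype ι]

def supportedStdSimplex (s : Set ι) : Set (ι → 𝕜) :=
  {x | x ∈ stdSimplex 𝕜 ι ∧ ∀ j ∉ s, x j = 0}

def supportedRowStochastic (adj : m → ι → Prop) : Set (Matrix m ι 𝕜) :=
  {T | (∀ i j, 0 ≤ T i j) ∧ (∀ i, ∑ j, T i j = 1) ∧ (∀ i j, ¬ adj i j → T i j = 0)}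

variable {𝕜}

theorem supportedRowStochastic_eq_pi (adj : m → ι → Prop) :
    supportedRowStochastic 𝕜 adj = univ.pi fun i => supportedStdSimplex 𝕜 {j | adj i j} := by
  ext T
  -- `Matrix m ι 𝕜` unfolds to `m → ι → 𝕜` only at default transparency, so `simp` cannot use
  -- `mem_univ_pi` on a matrix by itself.
  refine Iff.trans ?_ (mem_univ_pi (f := T)).symm
  simp only [supportedRowStochastic, supportedStdSimplex, stdSimplex, mem_ofPred_eq, forall_and]
  tauto

end Semiring

section Field

variable {𝕜 : Type*} [Field 𝕜] [LinearOrder 𝕜] [IsStrictOrderedRing 𝕜] {ι m : Type*} [Fintype ι]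

theorem convex_supportedStdSimplex (s : Set ι) : Convex 𝕜 (supportedStdSimplex 𝕜 s) := by
  rintro x ⟨hx, hxs⟩ y ⟨hy, hys⟩ a b ha hb hab
  refine ⟨convex_stdSimplex 𝕜 ι hx hy ha hb hab, fun j hj => ?_⟩
  simp [hxs j hj, hys j hj]

theorem single_mem_supportedStdSimplex [DecidableEq ι] {s : Set ι} {j : ι} (hj : j ∈ s) :
    Pi.single j 1 ∈ supportedStdSimplex 𝕜 s :=
  ⟨single_mem_stdSimplex 𝕜 j, fun _ hk => Pi.single_eq_of_ne (ne_of_mem_of_not_mem hj hk).symm _⟩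

theorem convexHull_supportedStdSimplex_inter_zeroOne (s : Set ι) :
    convexHull 𝕜 (supportedStdSimplex 𝕜 s ∩ {x | ∀ j, x j = 0 ∨ x j = 1}) =
      supportedStdSimplex 𝕜 s := by
  classical
  refine (convexHull_min inter_subset_left (convex_supportedStdSimplex s)).antisymm ?_
  rintro x ⟨⟨hx₀, hx₁⟩, hxs⟩
  have hsupp : ∀ j, x j ≠ 0 → j ∈ s := fun j hj => by_contra fun h => hj (hxs j h)
  have hsum : ∑ j ∈ univ.filter (· ∈ s), x j = 1 :=
    (sum_filter_of_ne fun j _ => hsupp j).trans hx₁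
  have hx : (univ.filter (· ∈ s)).centerMass x (fun j => Pi.single j (1 : 𝕜)) = x := by
    rw [centerMass_eq_of_sum_1 _ _ hsum,
      sum_filter_of_ne fun j _ h => hsupp j (left_ne_zero_of_smul h)]
    exact (pi_eq_sum_univ' x).symm
  rw [← hx]
  refine centerMass_mem_convexHull _ (fun j _ => hx₀ j) (hsum ▸ zero_lt_one) fun j hj => ?_
  refine ⟨single_mem_supportedStdSimplex (mem_filter.1 hj).2, fun k => ?_⟩
  rw [Pi.single_apply]
  split_ifs <;> simp

theorem convexHull_supportedRowStochastic_inter_zeroOne [Finite m] (adj : m → ι → Prop) :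
    convexHull 𝕜 (supportedRowStochastic 𝕜 adj ∩ {T | ∀ i j, T i j = 0 ∨ T i j = 1}) =
      supportedRowStochastic 𝕜 adj := by
  have hpi : supportedRowStochastic 𝕜 adj ∩ {T | ∀ i j, T i j = 0 ∨ T i j = 1} =
      univ.pi fun i => supportedStdSimplex 𝕜 {j | adj i j} ∩ {x | ∀ j, x j = 0 ∨ x j = 1} := by
    rw [pi_inter_distrib, supportedRowStochastic_eq_pi]
    congr 1
    ext T
    exact (mem_univ_pi (f := T) (t := fun _ => {x : ι → 𝕜 | ∀ j, x j = 0 ∨ x j = 1})).symm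
  rw [hpi, supportedRowStochastic_eq_pi]
  exact (convexHull_pi _ _).trans (by simp_rw [convexHull_supportedStdSimplex_inter_zeroOne])

end Field

theorem stmt_17_general (n : Type*) [Fintype n]
    (adj : n → n → Prop) :
    {T : Matrix n n ℝ |
        (∀ i j, 0 ≤ T i j) ∧ (∀ i, ∑ j, T i j = 1) ∧
        (∀ i j, ¬ adj i j → T i j = 0)} =
      convexHull ℝ
        {T : Matrix n n ℝ |
          ((∀ i j, 0 ≤ T i j) ∧ (∀ i, ∑ j, T i j = 1) ∧
            (∀ i j, ¬ adj i j → T i j = 0)) ∧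
          ∀ i j, T i j = 0 ∨ T i j = 1} :=
  (convexHull_supportedRowStochastic_inter_zeroOne adj).symm

theorem stmt_17 (n : Type*) [Fintype n] [Nonempty n]
    (adj : n → n → Prop) (hadj : ∀ i, ∃ j, adj i j) :
    {T : Matrix n n ℝ |
        (∀ i j, 0 ≤ T i j) ∧ (∀ i, ∑ j, T i j = 1) ∧
        (∀ i j, ¬ adj i j → T i j = 0)} =
      convexHull ℝ
        {T : Matrix n n ℝ |
          ((∀ i j, 0 ≤ T i j) ∧ (∀ i, ∑ j, T i j = 1) ∧
            (∀ i j, ¬ adj i j → T i j = 0)) ∧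
          ∀ i j, T i j = 0 ∨ T i j = 1} :=
  stmt_17_general n adj
end

section
/- Let d ≥ 1 and n ≥ 1 be natural numbers, let f : ℝ^d → ℝ be continuous, and let g₁, …, g_n : ℝ^d → ℝ be linear functionals such that for every x ∈ ℝ^d there exists i with f(x) = g_i(x) (f is piecewise linear with components among the g_i). Then there exists a nonempty finite family {F_j}_{j ∈ J} of nonempty subsets of {1, …, n} such that f(x) = max_{j ∈ J} min_{i ∈ F_j} g_i(x) for all x ∈ ℝ^d. Conversely, for any linear functionals g₁, …, g_n and any nonempty finite family {F_j}_{j ∈ J} of nonempty subsets of {1, …, n}, the function x ↦ max_{j ∈ J} min_{i ∈ F_j} g_i(x) is continuous and at every point equals one of the g_i. -/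
open Topology Filter

lemma my_ciSup_eq_sup' {β : Type*} (J : Finset β) (hJ : J.Nonempty) (v : ↥J → ℝ) :
    ⨆ F : J, v F = J.attach.sup' (hJ.attach) v := by
  rw [Finset.sup'_eq_csSup_image, iSup]
  congr 1
  ext r
  simp [Set.mem_image, Finset.mem_attach, Set.mem_range]

lemma my_ciInf_eq_inf' {β : Type*} (J : Finset β) (hJ : J.Nonempty) (v : ↥J → ℝ) :
    ⨅ F : J, v F = J.attach.inf' (hJ.attach) v := by
  rw [Finset.inf'_eq_csInf_image, iInf]
  congr 1
  ext r
  simp [Set.mem_image, Finset.mem_attach, Set.mem_range]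

lemma my_key {d n : ℕ} (f : EuclideanSpace ℝ (Fin d) → ℝ)
    (g : Fin n → (EuclideanSpace ℝ (Fin d) →ₗ[ℝ] ℝ))
    (hf : Continuous f) (hsel : ∀ x, ∃ i, f x = g i x) (x y : EuclideanSpace ℝ (Fin d)) :
    ∃ i, f x ≤ g i x ∧ g i y ≤ f y := by
  classical
  set γ : ℝ → EuclideanSpace ℝ (Fin d) := fun t => x + t • (y - x) with hγ
  have hγcont : Continuous γ := by
    exact continuous_const.add (continuous_id.smul continuous_const)
  have hγ0 : γ 0 = x := by simp [hγ]
  have hγ1 : γ 1 = y := by simp [hγ]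
  have hgc : ∀ i, Continuous fun t => g i (γ t) := fun i =>
    ((g i).continuous_of_finiteDimensional).comp hγcont
  have hφc : Continuous fun t => f (γ t) := hf.comp hγcont
  have haff : ∀ (i : Fin n) (t : ℝ), g i (γ t) = g i x + t * (g i y - g i x) := by
    intro i t
    simp only [hγ, map_add, map_smul, map_sub, smul_eq_mul]
  set S : Finset (Fin n) := Finset.univ.filter (fun i => f x ≤ g i x) with hSdef
  obtain ⟨i0, hi0⟩ := hsel x
  have hi0S : i0 ∈ S := Finset.mem_filter.2 ⟨Finset.mem_univ _, hi0.le⟩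
  have hS : S.Nonempty := ⟨i0, hi0S⟩
  set ψ : ℝ → ℝ := fun t => S.inf' hS (fun i => g i (γ t)) with hψdef
  have hψcont : Continuous ψ := Continuous.finset_inf'_apply hS (fun i _ => hgc i)
  set C : Set ℝ := Set.Icc (0:ℝ) 1 ∩ {t | ψ t ≤ f (γ t)} with hCdef
  have hC0 : (0:ℝ) ∈ C := by
    refine ⟨⟨le_refl 0, zero_le_one⟩, ?_⟩
    have : ψ 0 ≤ g i0 (γ 0) := Finset.inf'_le _ hi0S
    simpa [hγ0, ← hi0] using this
  have hCclosed : IsClosed C := isClosed_Icc.inter (isClosed_le hψcont hφc)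
  have hCbdd : BddAbove C := ⟨1, fun t ht => ht.1.2⟩
  set u : ℝ := sSup C with hu
  have huC : u ∈ C := hCclosed.csSup_mem ⟨0, hC0⟩ hCbdd
  have key1 : (1:ℝ) ∈ C := by
    by_contra h1
    have hu1 : u < 1 := lt_of_le_of_ne huC.1.2 (fun h => h1 (h ▸ huC))
    -- Step A : ψ u = f (γ u)
    have hψu : ψ u = f (γ u) := by
      refine le_antisymm huC.2 ?_
      by_contra hlt
      push_neg at hlt
      have h1' : ∀ᶠ t in 𝓝[>] u, ψ t < f (γ t) :=
        eventually_nhdsWithin_of_eventually_nhds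
          (eventually_of_mem ((isOpen_lt hψcont hφc).mem_nhds hlt) (fun t ht => ht))
      have h2' : ∀ᶠ t in 𝓝[>] u, t ∈ Set.Ioc u 1 :=
        Ioc_mem_nhdsGT_of_mem ⟨le_refl u, hu1⟩
      obtain ⟨t, htU, htIoc⟩ := (h1'.and h2').exists
      have htC : t ∈ C := ⟨⟨le_trans huC.1.1 htIoc.1.le, htIoc.2⟩, htU.le⟩
      exact absurd (le_csSup hCbdd htC) (not_le.2 htIoc.1)
    -- Step B : find j touching at u and at some t' > u
    have hcover : Set.Ioc u 1 ⊆ ⋃ j : Fin n, ({t | g j (γ t) = f (γ t)} ∩ Set.Ioc u 1) := by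
      intro t ht
      obtain ⟨j, hj⟩ := hsel (γ t)
      exact Set.mem_iUnion.2 ⟨j, hj.symm, ht⟩
    have hu_cl : u ∈ closure (Set.Ioc u 1) := by
      rw [closure_Ioc hu1.ne]
      exact ⟨le_refl u, hu1.le⟩
    have hu_cl2 : u ∈ ⋃ j : Fin n, closure ({t | g j (γ t) = f (γ t)} ∩ Set.Ioc u 1) := by
      rw [← closure_iUnion_of_finite]
      exact closure_mono hcover hu_cl
    obtain ⟨j, hj⟩ := Set.mem_iUnion.1 hu_cl2
    have hZclosed : IsClosed {t | g j (γ t) = f (γ t)} := isClosed_eq (hgc j) hφc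
    have hju : g j (γ u) = f (γ u) :=
      hZclosed.closure_subset (closure_mono Set.inter_subset_left hj)
    obtain ⟨t', ht'Z, ht'Ioc⟩ : ({t | g j (γ t) = f (γ t)} ∩ Set.Ioc u 1).Nonempty :=
      Set.nonempty_of_mem (closure_nonempty_iff.1 ⟨u, hj⟩).some_mem
    -- Step C
    obtain ⟨i₁, hi₁S, hi₁⟩ := S.exists_mem_eq_inf' hS (fun i => g i (γ u))
    have ht'C : t' ∉ C := fun h => absurd (le_csSup hCbdd h) (not_le.2 ht'Ioc.1)
    have hlt' : f (γ t') < ψ t' := by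
      by_contra hle
      push_neg at hle
      exact ht'C ⟨⟨le_trans huC.1.1 ht'Ioc.1.le, ht'Ioc.2⟩, hle⟩
    have e1 : g i₁ (γ u) = g j (γ u) := by
      rw [← hi₁]
      show ψ u = _
      rw [hψu]
      exact hju.symm
    have e2 : g j (γ t') < g i₁ (γ t') := by
      calc g j (γ t') = f (γ t') := ht'Z
        _ < ψ t' := hlt'
        _ ≤ g i₁ (γ t') := Finset.inf'_le _ hi₁S
    rw [haff, haff] at e1 e2
    have hu0 : 0 ≤ u := huC.1.1
    have hut' : u < t' := ht'Ioc.1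
    have hij : g i₁ x ≤ g j x := by nlinarith [e1, e2, hu0, hut']
    have hjS : j ∈ S := by
      simp only [hSdef, Finset.mem_filter, Finset.mem_univ, true_and]
      have : f x ≤ g i₁ x := by
        have := hi₁S
        simp only [hSdef, Finset.mem_filter, Finset.mem_univ, true_and] at this
        exact this
      linarith
    have : ψ t' ≤ g j (γ t') := Finset.inf'_le _ hjS
    rw [ht'Z] at this
    exact absurd this (not_le.2 hlt')
  obtain ⟨i, hiS, hieq⟩ := S.exists_mem_eq_inf' hS (fun i => g i (γ 1))
  have hfx : f x ≤ g i x := by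
    simp only [hSdef, Finset.mem_filter, Finset.mem_univ, true_and] at hiS
    exact hiS
  have h2 : ψ 1 = g i (γ 1) := hieq
  rw [hγ1] at h2
  have h3 : ψ 1 ≤ f (γ 1) := key1.2
  rw [hγ1] at h3
  exact ⟨i, hfx, h2 ▸ h3⟩

theorem stmt_19 (d n : ℕ) (hd : 1 ≤ d) (hn : 1 ≤ n) :
    (∀ (f : EuclideanSpace ℝ (Fin d) → ℝ)
       (g : Fin n → (EuclideanSpace ℝ (Fin d) →ₗ[ℝ] ℝ)),
      Continuous f → (∀ x, ∃ i, f x = g i x) →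
      ∃ J : Finset (Finset (Fin n)), J.Nonempty ∧ (∀ F ∈ J, F.Nonempty) ∧
        ∀ x, f x = ⨆ F : J, ⨅ i : {i // i ∈ (F : Finset (Fin n))}, g i.1 x) ∧
    (∀ (g : Fin n → (EuclideanSpace ℝ (Fin d) →ₗ[ℝ] ℝ))
       (J : Finset (Finset (Fin n))),
      J.Nonempty → (∀ F ∈ J, F.Nonempty) →
      Continuous (fun x : EuclideanSpace ℝ (Fin d) =>
        ⨆ F : J, ⨅ i : {i // i ∈ (F : Finset (Fin n))}, g i.1 x) ∧
      ∀ x, ∃ i : Fin n,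
        (⨆ F : J, ⨅ i : {i // i ∈ (F : Finset (Fin n))}, g i.1 x) = g i x) := by
  classical
  constructor
  · intro f g hf hsel
    set Sx : EuclideanSpace ℝ (Fin d) → Finset (Fin n) :=
      fun z => Finset.univ.filter (fun i => f z ≤ g i z) with hSx
    have hSxne : ∀ z, (Sx z).Nonempty := by
      intro z
      obtain ⟨i, hi⟩ := hsel z
      exact ⟨i, Finset.mem_filter.2 ⟨Finset.mem_univ _, hi.le⟩⟩
    set J : Finset (Finset (Fin n)) :=
      Finset.univ.filter (fun F => ∃ z, F = Sx z) with hJ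
    have hJne : J.Nonempty := ⟨Sx 0, Finset.mem_filter.2 ⟨Finset.mem_univ _, ⟨0, rfl⟩⟩⟩
    have hJmem : ∀ F ∈ J, ∃ z, F = Sx z := fun F hF => (Finset.mem_filter.1 hF).2
    refine ⟨J, hJne, ?_, ?_⟩
    · intro F hF
      obtain ⟨z, rfl⟩ := hJmem F hF
      exact hSxne z
    · intro xx
      rw [my_ciSup_eq_sup' J hJne]
      refine le_antisymm ?_ ?_
      · have hmem : Sx xx ∈ J := Finset.mem_filter.2 ⟨Finset.mem_univ _, ⟨xx, rfl⟩⟩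
        refine le_trans ?_ (Finset.le_sup' _ (Finset.mem_attach J ⟨Sx xx, hmem⟩))
        rw [my_ciInf_eq_inf' (Sx xx) (hSxne xx)]
        refine Finset.le_inf' _ _ ?_
        intro i _
        exact (Finset.mem_filter.1 i.2).2
      · refine Finset.sup'_le _ _ ?_
        intro F _
        obtain ⟨z, hz⟩ := hJmem F.1 F.2
        have hFne : (F : Finset (Fin n)).Nonempty := hz ▸ hSxne z
        rw [my_ciInf_eq_inf' (F : Finset (Fin n)) hFne]
        obtain ⟨i, hiz, hix⟩ := my_key f g hf hsel z xx
        have hiF : i ∈ (F : Finset (Fin n)) := by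
          rw [hz]; exact Finset.mem_filter.2 ⟨Finset.mem_univ _, hiz⟩
        exact le_trans (Finset.inf'_le _ (Finset.mem_attach _ ⟨i, hiF⟩)) hix
  · intro g J hJne hFne
    have hrw : ∀ x, (⨆ F : J, ⨅ i : {i // i ∈ (F : Finset (Fin n))}, g i.1 x)
        = J.attach.sup' hJne.attach
            (fun F => (F : Finset (Fin n)).attach.inf' (hFne F.1 F.2).attach
              (fun i => g i.1 x)) := by
      intro x
      rw [my_ciSup_eq_sup' J hJne]
      refine Finset.sup'_congr _ rfl ?_
      intro F _
      exact my_ciInf_eq_inf' (F : Finset (Fin n)) (hFne F.1 F.2) _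
    constructor
    · have heq : (fun x : EuclideanSpace ℝ (Fin d) =>
          ⨆ F : J, ⨅ i : {i // i ∈ (F : Finset (Fin n))}, g i.1 x)
          = fun x => J.attach.sup' hJne.attach
              (fun F => (F : Finset (Fin n)).attach.inf' (hFne F.1 F.2).attach
                (fun i => g i.1 x)) := funext hrw
      rw [heq]
      refine Continuous.finset_sup'_apply hJne.attach ?_
      intro F _
      exact Continuous.finset_inf'_apply (hFne F.1 F.2).attach
        (fun i _ => (g i.1).continuous_of_finiteDimensional)
    · intro x
      rw [hrw x]
      obtain ⟨F, hFJ, hFeq⟩ := Finset.exists_mem_eq_sup' hJne.attach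
        (fun F : ↥J => (F : Finset (Fin n)).attach.inf' (hFne F.1 F.2).attach
          (fun i => g i.1 x))
      rw [hFeq]
      obtain ⟨i, _, hieq⟩ := Finset.exists_mem_eq_inf' (hFne F.1 F.2).attach
        (fun i : {i // i ∈ (F : Finset (Fin n))} => g i.1 x)
      exact ⟨i.1, hieq⟩
end
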